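/- Let X be a compact Hausdorff topological space with a continuous right action of B, and let M be a minimal set for the horocycle flow on X. Then the set C = {t ∈ ℝ : g_t(M) = M} coincides with the set {t ∈ ℝ : g_t(M) ∩ M ≠ ∅}, and C is a closed additive subgroup of ℝ. -/

import Mathlib

open Matrix Real
open scoped MatrixGroups UpperHalfPlane

/-- The diagonal matrix `d(t)` generating the geodesic flow. -/
noncomputable def dMat (t : ℝ) : SL(2, ℝ) :=
  ⟨!![Real.exp (t / 2), 0; 0, Real.exp (-(t / 2))], by
    simp [Matrix.det_fin_two_of, ← Real.exp_add]⟩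

/-- The unipotent matrix `u(s)` generating the horocycle flow. -/
noncomputable def uMat (s : ℝ) : SL(2, ℝ) :=
  ⟨!![1, s; 0, 1], by simp [Matrix.det_fin_two_of]⟩

/-- The upper-triangular subgroup `B` of `SL(2,ℝ)` with positive diagonal. -/
def Bsub : Subgroup SL(2, ℝ) where
  carrier := {g | g.1 1 0 = 0 ∧ 0 < g.1 0 0}
  one_mem' := by norm_num
  mul_mem' := by
    rintro a b ⟨ha0, ha1⟩ ⟨hb0, hb1⟩
    constructor
    · show (a * b).1 1 0 = 0
      rw [Matrix.SpecialLinearGroup.coe_mul, Matrix.mul_apply, Fin.sum_univ_two, ha0, hb0]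
      ring
    · show 0 < (a * b).1 0 0
      rw [Matrix.SpecialLinearGroup.coe_mul, Matrix.mul_apply, Fin.sum_univ_two, hb0]
      simpa using mul_pos ha1 hb1
  inv_mem' := by
    rintro a ⟨ha0, ha1⟩
    have hdet := a.2
    rw [Matrix.det_fin_two, ha0] at hdet
    constructor
    · show (a⁻¹).1 1 0 = 0
      rw [Matrix.SpecialLinearGroup.SL2_inv_expl]
      simp [ha0]
    · show 0 < (a⁻¹).1 0 0
      rw [Matrix.SpecialLinearGroup.SL2_inv_expl]
      simp only [Matrix.SpecialLinearGroup.coe_mk]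
      show 0 < a.1 1 1
      nlinarith

theorem dMat_mem_B (t : ℝ) : dMat t ∈ Bsub := by
  constructor
  · show (dMat t).1 1 0 = 0
    simp [dMat]
  · show 0 < (dMat t).1 0 0
    simp [dMat, Real.exp_pos]

theorem uMat_mem_B (s : ℝ) : uMat s ∈ Bsub := by
  constructor
  · show (uMat s).1 1 0 = 0
    simp [uMat]
  · show 0 < (uMat s).1 0 0
    simp [uMat]

/-- The matrix topology on `SL(2,ℝ)`, induced from the space of matrices. -/
instance : TopologicalSpace SL(2, ℝ) :=
  TopologicalSpace.induced (fun g => (g : Matrix (Fin 2) (Fin 2) ℝ)) inferInstance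

/-- `d(t)` as an element of the subgroup `B`. -/
noncomputable def dB (t : ℝ) : Bsub := ⟨dMat t, dMat_mem_B t⟩

/-- `u(s)` as an element of the subgroup `B`. -/
noncomputable def uB (s : ℝ) : Bsub := ⟨uMat s, uMat_mem_B s⟩

section

variable {X : Type*} [TopologicalSpace X]

/-- `M` is a minimal set for the horocycle flow: nonempty, closed, invariant under the
horocycle flow, and properly containing no nonempty closed invariant subset. -/
def IsMinimalHoro (act : X → Bsub → X) (M : Set X) : Prop :=
  M.Nonempty ∧ IsClosed M ∧ (∀ s : ℝ, (fun x => act x (uB s)) '' M = M) ∧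
    ∀ M' : Set X, M' ⊆ M → M'.Nonempty → IsClosed M' →
      (∀ s : ℝ, (fun x => act x (uB s)) '' M' = M') → M' = M

end

/-! Since `d(t)` normalises `U`, the geodesic flow maps closed `U`-invariant sets to closed
`U`-invariant sets. If `g_t M` meets `M`, then `g_t M ∩ M` is a nonempty closed invariant subset of
`M`, so it is `M` by minimality, i.e. `M ⊆ g_t M`; as `g_{-t} M` then meets `M` too, also
`M ⊆ g_{-t} M`, and hence `g_t M = M`. The stabiliser is therefore `{t | g_t x₀ ∈ M}` for any
`x₀ ∈ M`, a closed set, and it is a subgroup since `t ↦ g_t` is a homomorphism. -/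

structure IsRightAction {X G : Type*} [Group G] (act : X → G → X) : Prop where
  act_one : ∀ x, act x 1 = x
  act_mul : ∀ x g h, act (act x g) h = act x (g * h)

namespace IsRightAction

variable {X G : Type*} [Group G] {act : X → G → X}

theorem image_image (hact : IsRightAction act) (g h : G) (A : Set X) :
    (fun x => act x h) '' ((fun x => act x g) '' A) = (fun x => act x (g * h)) '' A := by
  simp only [Set.image_image, hact.act_mul]

theorem image_one (hact : IsRightAction act) (A : Set X) : (fun x => act x 1) '' A = A := by
  simp only [hact.act_one, Set.image_id']

theorem image_inv_image (hact : IsRightAction act) (g : G) (A : Set X) :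
    (fun x => act x g⁻¹) '' ((fun x => act x g) '' A) = A := by
  rw [hact.image_image, mul_inv_cancel, hact.image_one]

theorem image_image_inv (hact : IsRightAction act) (g : G) (A : Set X) :
    (fun x => act x g) '' ((fun x => act x g⁻¹) '' A) = A := by
  rw [hact.image_image, inv_mul_cancel, hact.image_one]

theorem injective (hact : IsRightAction act) (g : G) : Function.Injective fun x => act x g :=
  fun x y hxy => by
    simpa only [hact.act_mul, mul_inv_cancel, hact.act_one] using congrArg (act · g⁻¹) hxy

theorem image_eq_preimage_inv (hact : IsRightAction act) (g : G) (A : Set X) :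
    (fun x => act x g) '' A = (fun x => act x g⁻¹) ⁻¹' A := by
  ext x
  constructor
  · rintro ⟨y, hy, rfl⟩
    simpa only [Set.mem_preimage, hact.act_mul, mul_inv_cancel, hact.act_one] using hy
  · intro hx
    exact ⟨act x g⁻¹, hx, by simp only [hact.act_mul, inv_mul_cancel, hact.act_one]⟩

theorem isClosed_image [TopologicalSpace X] (hact : IsRightAction act)
    (hcont : ∀ g, Continuous fun x => act x g) (g : G) {A : Set X} (hA : IsClosed A) :
    IsClosed ((fun x => act x g) '' A) := by
  rw [hact.image_eq_preimage_inv]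
  exact hA.preimage (hcont g⁻¹)

end IsRightAction

lemma dMat_add (t t' : ℝ) : dMat (t + t') = dMat t * dMat t' := by
  ext i j
  rw [Matrix.SpecialLinearGroup.coe_mul]
  fin_cases i <;> fin_cases j <;>
    simp [dMat, Matrix.mul_apply, Fin.sum_univ_two, ← Real.exp_add] <;> ring_nf

lemma dMat_mul_uMat (t s : ℝ) : dMat t * uMat s = uMat (s * Real.exp t) * dMat t := by
  ext i j
  rw [Matrix.SpecialLinearGroup.coe_mul, Matrix.SpecialLinearGroup.coe_mul]
  fin_cases i <;> fin_cases j <;>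
    simp [dMat, uMat, Matrix.mul_apply, Fin.sum_univ_two]
  rw [mul_assoc, ← Real.exp_add, mul_comm]
  ring_nf

lemma continuous_dMat : Continuous dMat := by
  refine continuous_induced_rng.2 (continuous_matrix fun i j => ?_)
  fin_cases i <;> fin_cases j <;> simp [dMat] <;> fun_prop

lemma dB_add (t t' : ℝ) : dB (t + t') = dB t * dB t' := Subtype.ext (dMat_add t t')

lemma dB_zero : dB 0 = 1 :=
  Subtype.ext <| show dMat 0 = 1 by ext i j; fin_cases i <;> fin_cases j <;> simp [dMat]

lemma dB_neg (t : ℝ) : dB (-t) = (dB t)⁻¹ :=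
  eq_inv_of_mul_eq_one_left (by rw [← dB_add, neg_add_cancel, dB_zero])

lemma dB_mul_uB (t s : ℝ) : dB t * uB s = uB (s * Real.exp t) * dB t :=
  Subtype.ext (dMat_mul_uMat t s)

lemma continuous_dB : Continuous dB :=
  continuous_dMat.subtype_mk dMat_mem_B

section Horocycle

variable {X : Type*} {act : X → Bsub → X}

def IsHoroInvariant (act : X → Bsub → X) (A : Set X) : Prop :=
  ∀ s : ℝ, (fun x => act x (uB s)) '' A = A

theorem IsHoroInvariant.image_dB (hact : IsRightAction act) {A : Set X}
    (hA : IsHoroInvariant act A) (t : ℝ) :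
    IsHoroInvariant act ((fun x => act x (dB t)) '' A) := fun s => by
  rw [hact.image_image, dB_mul_uB, ← hact.image_image, hA]

theorem IsHoroInvariant.inter (hact : IsRightAction act) {A A' : Set X}
    (hA : IsHoroInvariant act A) (hA' : IsHoroInvariant act A') :
    IsHoroInvariant act (A ∩ A') := fun s => by
  rw [Set.image_inter (hact.injective _), hA s, hA' s]

def IsRightAction.geodesicStabilizer (hact : IsRightAction act) (M : Set X) : AddSubgroup ℝ where
  carrier := {t | (fun x => act x (dB t)) '' M = M}
  zero_mem' := show (fun x => act x (dB 0)) '' M = M by rw [dB_zero, hact.image_one]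
  add_mem' {t t'} ht ht' := show (fun x => act x (dB (t + t'))) '' M = M by
    rw [dB_add, ← hact.image_image, ht, ht']
  neg_mem' {t} ht := show (fun x => act x (dB (-t))) '' M = M by
    calc _ = (fun x => act x (dB t)⁻¹) '' ((fun x => act x (dB t)) '' M) := by rw [dB_neg, ht]
      _ = M := hact.image_inv_image _ _

variable [TopologicalSpace X] {M : Set X}

theorem IsMinimalHoro.subset_image_dB (hM : IsMinimalHoro act M) (hact : IsRightAction act)
    (hcont : ∀ g, Continuous fun x => act x g) {t : ℝ}
    (ht : ((fun x => act x (dB t)) '' M ∩ M).Nonempty) :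
    M ⊆ (fun x => act x (dB t)) '' M := by
  obtain ⟨-, hMc, hMi, hmin⟩ := hM
  have hinter := hmin _ Set.inter_subset_right ht ((hact.isClosed_image hcont _ hMc).inter hMc)
    ((IsHoroInvariant.image_dB hact hMi t).inter hact hMi)
  exact hinter.ge.trans Set.inter_subset_left

theorem IsMinimalHoro.image_dB_eq (hM : IsMinimalHoro act M) (hact : IsRightAction act)
    (hcont : ∀ g, Continuous fun x => act x g) {t : ℝ}
    (ht : ((fun x => act x (dB t)) '' M ∩ M).Nonempty) :
    (fun x => act x (dB t)) '' M = M := by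
  have hneg : ((fun x => act x (dB (-t))) '' M ∩ M).Nonempty := by
    obtain ⟨_, ⟨x, hx, rfl⟩, hxt⟩ := ht
    refine ⟨x, ⟨_, hxt, ?_⟩, hx⟩
    simp only [hact.act_mul, dB_neg, mul_inv_cancel, hact.act_one]
  refine Set.Subset.antisymm ?_ (hM.subset_image_dB hact hcont ht)
  have h := Set.image_mono (f := fun x => act x (dB t)) (hM.subset_image_dB hact hcont hneg)
  rwa [dB_neg, hact.image_image_inv] at h

theorem IsMinimalHoro.isClosed_geodesicStabilizer (hM : IsMinimalHoro act M)
    (hact : IsRightAction act) (hcont : ∀ g, Continuous fun x => act x g)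
    (hflow : ∀ x, Continuous fun t => act x (dB t)) :
    IsClosed (hact.geodesicStabilizer M : Set ℝ) := by
  obtain ⟨x₀, hx₀⟩ := hM.1
  have hstab : (hact.geodesicStabilizer M : Set ℝ) = (fun t => act x₀ (dB t)) ⁻¹' M := by
    ext t
    exact ⟨fun ht => ht ▸ ⟨x₀, hx₀, rfl⟩,
      fun ht => hM.image_dB_eq hact hcont ⟨_, ⟨x₀, hx₀, rfl⟩, ht⟩⟩
  rw [hstab]
  exact hM.2.1.preimage (hflow x₀)

end Horocycle

theorem stabilizer_times_of_minimal_set_general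
    {X : Type*} [TopologicalSpace X]
    (act : X → Bsub → X)
    (act_one : ∀ x : X, act x 1 = x)
    (act_mul : ∀ (x : X) (g h : Bsub), act (act x g) h = act x (g * h))
    (act_cont : Continuous fun p : X × Bsub => act p.1 p.2)
    (M : Set X) (hM : IsMinimalHoro act M) :
    {t : ℝ | (fun x => act x (dB t)) '' M = M} =
      {t : ℝ | ((fun x => act x (dB t)) '' M ∩ M).Nonempty} ∧
    ∃ C : AddSubgroup ℝ, (C : Set ℝ) = {t : ℝ | (fun x => act x (dB t)) '' M = M} ∧
      IsClosed (C : Set ℝ)  := by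
  have hact : IsRightAction act := ⟨act_one, act_mul⟩
  have hcont : ∀ g, Continuous fun x => act x g := fun g =>
    act_cont.comp (continuous_id.prodMk continuous_const)
  refine ⟨Set.ext fun t => ⟨fun ht => ?_, hM.image_dB_eq hact hcont⟩,
    hact.geodesicStabilizer M, rfl, hM.isClosed_geodesicStabilizer hact hcont fun x =>
      act_cont.comp (continuous_const.prodMk continuous_dB)⟩
  rw [Set.mem_ofPred_eq, ht, Set.inter_self]
  exact hM.1

/-- Let `X` be a compact Hausdorff space with a continuous right action of `B`
and let `M` be a minimal set for the horocycle flow. Then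
`C = {t : g_t(M) = M}` coincides with `{t : g_t(M) ∩ M ≠ ∅}`, and `C` is a closed additive
subgroup of `ℝ`. -/
theorem stabilizer_times_of_minimal_set
    {X : Type*} [TopologicalSpace X] [CompactSpace X] [T2Space X]
    (act : X → Bsub → X)
    (act_one : ∀ x : X, act x 1 = x)
    (act_mul : ∀ (x : X) (g h : Bsub), act (act x g) h = act x (g * h))
    (act_cont : Continuous fun p : X × Bsub => act p.1 p.2)
    (M : Set X) (hM : IsMinimalHoro act M) :
    {t : ℝ | (fun x => act x (dB t)) '' M = M} =
      {t : ℝ | ((fun x => act x (dB t)) '' M ∩ M).Nonempty} ∧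
    ∃ C : AddSubgroup ℝ, (C : Set ℝ) = {t : ℝ | (fun x => act x (dB t)) '' M = M} ∧
      IsClosed (C : Set ℝ) :=
  stabilizer_times_of_minimal_set_general act act_one act_mul act_cont M hM
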